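/- (Convergence into a hidden outlier, monotone case I.2.b.) Let E be a real normed vector space, A and B closed subsets of E, and α(t) = x + t•(y − x). Define F : E → ℤ by F(w) = −1 if w ∈ A ∩ B, F(w) = 0 if w belongs to exactly one of A and B, and F(w) = 1 if w ∉ A ∪ B. Assume x ∈ A ∩ B, y ∉ A, y ∉ B, and that there are s, s' ∈ [0,1] such that frontier A intersected with the segment [x,y] equals {α(s)}, frontier B intersected with the segment [x,y] equals {α(s')}, and α(s) ∉ B. Then the function t ↦ F(α(t)) is monotone nondecreasing on [0,1]. -/
import Mathlib

/-- Crossing lemma: a continuous path starting in a set `C` and ending outside it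
must meet the frontier of `C`. -/
lemma crossing_frontier {E : Type*} [TopologicalSpace E] {C : Set E} {f : ℝ → E}
    (hf : Continuous f) {a b : ℝ} (hab : a ≤ b) (ha : f a ∈ C) (hb : f b ∉ C)
    (hC : IsClosed C) : ∃ u ∈ Set.Icc a b, f u ∈ frontier C := by
  set S : Set ℝ := Set.Icc a b ∩ f ⁻¹' C with hS
  have hSne : S.Nonempty := ⟨a, ⟨le_refl a, hab⟩, ha⟩
  have hSbdd : BddAbove S := ⟨b, fun t ht => ht.1.2⟩
  set u := sSup S with hu
  have hSclosed : IsClosed S := isClosed_Icc.inter (hC.preimage hf)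
  have huS : u ∈ S := hSclosed.csSup_mem hSne hSbdd
  have huab : u ∈ Set.Icc a b := huS.1
  have hub : u < b := lt_of_le_of_ne huab.2 (fun h => hb (h ▸ huS.2))
  refine ⟨u, huab, ?_⟩
  rw [frontier, hC.closure_eq]
  refine ⟨huS.2, ?_⟩
  intro hint
  have hpre : f ⁻¹' interior C ∈ nhds u :=
    (hf.continuousAt).preimage_mem_nhds (isOpen_interior.mem_nhds hint)
  have h1 : ∀ᶠ t in nhdsWithin u (Set.Ioi u), f t ∈ interior C :=
    eventually_nhdsWithin_of_eventually_nhds hpre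
  have h2 : Set.Ioo u b ∈ nhdsWithin u (Set.Ioi u) := Ioo_mem_nhdsGT_of_mem ⟨le_refl u, hub⟩
  have : ∃ t, f t ∈ interior C ∧ t ∈ Set.Ioo u b := (h1.and h2).exists
  obtain ⟨t, htC, htuo⟩ := this
  have htS : t ∈ S := ⟨⟨huab.1.trans htuo.1.le, htuo.2.le⟩, (interior_subset htC : f t ∈ C)⟩
  exact absurd (le_csSup hSbdd htS) (not_le.mpr htuo.1)

open Classical in
/-- The indicator function used by the bisection method: `-1` on `A ∩ B`,
`0` on points belonging to exactly one of `A` and `B` (hidden outliers),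
and `1` outside `A ∪ B`. -/
noncomputable def bisectIndicator {E : Type*} (A B : Set E) (w : E) : ℤ :=
  if w ∈ A ∩ B then -1 else if w ∈ A ∪ B then 0 else 1

theorem monotone_case_I2b {E : Type*} [NormedAddCommGroup E] [NormedSpace ℝ E]
    (A B : Set E) (hA : IsClosed A) (hB : IsClosed B) (x y : E)
    (hxA : x ∈ A) (hxB : x ∈ B) (hyA : y ∉ A) (hyB : y ∉ B)
    (s s' : ℝ) (hs : s ∈ Set.Icc (0:ℝ) 1) (hs' : s' ∈ Set.Icc (0:ℝ) 1)
    (hfrA : frontier A ∩ (fun t : ℝ => x + t • (y - x)) '' Set.Icc (0:ℝ) 1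
      = {x + s • (y - x)})
    (hfrB : frontier B ∩ (fun t : ℝ => x + t • (y - x)) '' Set.Icc (0:ℝ) 1
      = {x + s' • (y - x)})
    (hsB : x + s • (y - x) ∉ B) :
    MonotoneOn (fun t : ℝ => bisectIndicator A B (x + t • (y - x)))
      (Set.Icc (0:ℝ) 1) := by
  set α : ℝ → E := fun t => x + t • (y - x) with hα
  have hcont : Continuous α := by continuity
  have hinj : Function.Injective α := by
    intro u v huv
    have hyx : y - x ≠ 0 := sub_ne_zero.mpr (fun h => hyA (h ▸ hxA))
    have : (u - v) • (y - x) = 0 := by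
      have := sub_eq_zero.mpr huv
      simp only [hα] at this
      rw [add_sub_add_left_eq_sub, ← sub_smul] at this
      exact this
    rcases smul_eq_zero.mp this with h | h
    · linarith [sub_eq_zero.mp h]
    · exact absurd h hyx
  have hα0 : α 0 = x := by simp [hα]
  have hα1 : α 1 = y := by simp [hα]
  -- Membership characterizations
  have key : ∀ (C : Set E) (hC : IsClosed C) (σ : ℝ), σ ∈ Set.Icc (0:ℝ) 1 →
      x ∈ C → y ∉ C →
      frontier C ∩ α '' Set.Icc (0:ℝ) 1 = {α σ} →
      ∀ t ∈ Set.Icc (0:ℝ) 1, (α t ∈ C ↔ t ≤ σ) := by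
    intro C hC σ hσ hxC hyC hfr t ht
    have hσfr : α σ ∈ frontier C := by
      have : α σ ∈ ({α σ} : Set E) := rfl
      rw [← hfr] at this; exact this.1
    constructor
    · intro htC
      by_contra hts
      push_neg at hts
      obtain ⟨u, hu, hufr⟩ := crossing_frontier hcont ht.2 htC (hα1 ▸ hyC) hC
      have hu01 : u ∈ Set.Icc (0:ℝ) 1 := ⟨ht.1.trans hu.1, hu.2⟩
      have : α u ∈ ({α σ} : Set E) := hfr ▸ ⟨hufr, ⟨u, hu01, rfl⟩⟩
      have := hinj this
      subst this
      exact absurd hu.1 (not_le.mpr hts)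
    · intro htσ
      by_contra htC
      obtain ⟨u, hu, hufr⟩ := crossing_frontier hcont ht.1 (hα0 ▸ hxC) htC hC
      have hu01 : u ∈ Set.Icc (0:ℝ) 1 := ⟨hu.1, hu.2.trans ht.2⟩
      have : α u ∈ ({α σ} : Set E) := hfr ▸ ⟨hufr, ⟨u, hu01, rfl⟩⟩
      have huσ := hinj this
      subst huσ
      have : t = u := le_antisymm htσ hu.2
      subst this
      exact htC (hC.frontier_subset hufr)
  have hAmem : ∀ t ∈ Set.Icc (0:ℝ) 1, (α t ∈ A ↔ t ≤ s) :=
    key A hA s hs hxA hyA hfrA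
  have hBmem : ∀ t ∈ Set.Icc (0:ℝ) 1, (α t ∈ B ↔ t ≤ s') :=
    key B hB s' hs' hxB hyB hfrB
  have hss' : s' < s := by
    by_contra h
    push_neg at h
    exact hsB ((hBmem s hs).mpr h)
  have val : ∀ t ∈ Set.Icc (0:ℝ) 1, bisectIndicator A B (α t)
      = if t ≤ s' then -1 else if t ≤ s then 0 else 1 := by
    intro t ht
    simp only [bisectIndicator]
    by_cases h1 : t ≤ s'
    · rw [if_pos ⟨(hAmem t ht).mpr (h1.trans hss'.le), (hBmem t ht).mpr h1⟩, if_pos h1]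
    · rw [if_neg (fun h => h1 ((hBmem t ht).mp h.2)), if_neg h1]
      by_cases h2 : t ≤ s
      · rw [if_pos (Set.mem_union_left _ ((hAmem t ht).mpr h2)), if_pos h2]
      · rw [if_neg, if_neg h2]
        rintro (h | h)
        · exact h2 ((hAmem t ht).mp h)
        · exact h1 ((hBmem t ht).mp h)
  intro t1 ht1 t2 ht2 h12
  show bisectIndicator A B (α t1) ≤ bisectIndicator A B (α t2)
  rw [val t1 ht1, val t2 ht2]
  split_ifs <;> first | (exfalso; linarith) | norm_num
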